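/- arXiv:1707.04295 — 5 statements merged into one kernel-verified Lean document; each statement's English description precedes it below -/
import Mathlib

section
/- Let H = (V, E) be the bipartite forest produced by the greedy pairing procedure, with edges e_0, e_1, …, e_{|E|−1} ordered by creation time, such that the set of edges incident to any vertex forms a consecutive interval in this ordering. Fix α ≥ 1 and partition the edges into consecutive blocks E_s = {e_i : αs ≤ i < α(s+1)} (merging the last short block into its predecessor). Call a vertex P split by block E_s if some edge incident to P is in E_s and some edge incident to P is outside E_s. Then each block E_s splits at most two vertices. -/
/-- Each consecutive block `E_s = {e_i : lo ≤ i < hi}` of the creation-ordered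
edge sequence of the greedy pairing forest splits at most two vertices.  Edges
are the pairs `e i = (plus-endpoint, minus-endpoint)`, componentwise monotone
and stepwise distinct (hence the edges incident to any fixed vertex form a
consecutive interval).  A vertex is split by the block if it is incident to an
edge inside the block and also to an edge outside the block. -/
theorem stmt_5 (N : ℕ) (e : ℕ → ℕ × ℕ)
    (hmono : ∀ i j, i ≤ j → j < N → (e i).1 ≤ (e j).1 ∧ (e i).2 ≤ (e j).2)
    (hstep : ∀ i, i + 1 < N → e i ≠ e (i + 1))
    (lo hi : ℕ) (hlohi : lo ≤ hi) (hhiN : hi ≤ N)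
    (split : ℕ ⊕ ℕ → Prop)
    (hsplitl : ∀ v, split (Sum.inl v) ↔
      (∃ i, lo ≤ i ∧ i < hi ∧ (e i).1 = v) ∧
      (∃ j < N, (j < lo ∨ hi ≤ j) ∧ (e j).1 = v))
    (hsplitr : ∀ v, split (Sum.inr v) ↔
      (∃ i, lo ≤ i ∧ i < hi ∧ (e i).2 = v) ∧
      (∃ j < N, (j < lo ∨ hi ≤ j) ∧ (e j).2 = v)) :
    {x | split x}.ncard ≤ 2 := by
  set A : ℕ ⊕ ℕ := if (e (lo-1)).1 = (e lo).1 then Sum.inl (e lo).1 else Sum.inr (e lo).2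
    with hA
  set B : ℕ ⊕ ℕ := if (e (hi-1)).1 = (e hi).1 then Sum.inl (e hi).1 else Sum.inr (e hi).2
    with hB
  have hsub : {x | split x} ⊆ {A, B} := by
    rintro (v | v) hx
    · rw [Set.mem_setOf_eq, hsplitl] at hx
      obtain ⟨⟨i, hloi, hih, hei⟩, j, hjN, hj, hej⟩ := hx
      have hiN : i < N := lt_of_lt_of_le hih hhiN
      rcases hj with hj | hj
      · -- straddles boundary lo
        have a1 := (hmono j (lo-1) (by omega) (by omega)).1
        have a2 := (hmono (lo-1) lo (by omega) (by omega)).1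
        have a3 := (hmono lo i hloi hiN).1
        have hv2 : (e lo).1 = v := by omega
        left
        rw [hA, if_pos (show (e (lo-1)).1 = (e lo).1 by omega), hv2]
      · -- straddles boundary hi
        have a1 := (hmono i (hi-1) (by omega) (by omega)).1
        have a2 := (hmono (hi-1) hi (by omega) (by omega)).1
        have a3 := (hmono hi j hj hjN).1
        have hv2 : (e hi).1 = v := by omega
        right
        rw [hB, if_pos (show (e (hi-1)).1 = (e hi).1 by omega), hv2]; exact rfl
    · rw [Set.mem_setOf_eq, hsplitr] at hx
      obtain ⟨⟨i, hloi, hih, hei⟩, j, hjN, hj, hej⟩ := hx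
      have hiN : i < N := lt_of_lt_of_le hih hhiN
      rcases hj with hj | hj
      · have a1 := (hmono j (lo-1) (by omega) (by omega)).2
        have a2 := (hmono (lo-1) lo (by omega) (by omega)).2
        have a3 := (hmono lo i hloi hiN).2
        have hv2 : (e lo).2 = v := by omega
        have hne : e (lo - 1) ≠ e lo := by
          have := hstep (lo-1) (by omega)
          rwa [show lo - 1 + 1 = lo by omega] at this
        left
        rw [hA, if_neg (fun h => hne (Prod.ext h (by omega))), hv2]
      · have a1 := (hmono i (hi-1) (by omega) (by omega)).2
        have a2 := (hmono (hi-1) hi (by omega) (by omega)).2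
        have a3 := (hmono hi j hj hjN).2
        have hv2 : (e hi).2 = v := by omega
        have hne : e (hi - 1) ≠ e hi := by
          have := hstep (hi-1) (by omega)
          rwa [show hi - 1 + 1 = hi by omega] at this
        right
        rw [hB, if_neg (fun h => hne (Prod.ext h (by omega))), hv2]; exact rfl
  calc {x | split x}.ncard ≤ ({A, B} : Set (ℕ ⊕ ℕ)).ncard :=
        Set.ncard_le_ncard hsub (Set.toFinite _)
    _ ≤ 2 := by simpa using Set.ncard_insert_le A {B}
end

section
/- With the setup of the previous statement (edges ordered so that each vertex's incident edges form a consecutive interval, blocks E_s consecutive of size ≥ α, each part/vertex containing at least one centre and at most 2ρ centres), let G_s be the union of the centres of all vertices incident to an edge of E_s. Then α − 1 ≤ |G_s| ≤ 8ρα for each block E_s of size at most 2α. -/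
/-!
Every edge of a forest can be assigned one of its endpoints injectively: root each component
and send an edge to its endpoint farther from the root, which determines the edge because a
vertex of a forest has only one neighbour closer to the root. Hence `|E_s|` is at most the
number of vertices incident to `E_s`, which in turn is at most `|G_s|` because the parts are
disjoint and nonempty. Conversely these vertices number at most `2|E_s| ≤ 4α`, and each
contributes at most `2ρ` centres.
-/

open Finset Function

namespace SimpleGraph

variable {V : Type*} {G : SimpleGraph V}

theorem IsAcyclic.eq_penultimate_of_dist_lt (hG : G.IsAcyclic) {r x y : V} {p : G.Walk r x}
    (hp : p.IsPath) (hadj : G.Adj x y) (hd : G.dist r y < G.dist r x) : y = p.penultimate := by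
  classical
  obtain ⟨q, hq, hql⟩ := (p.reachable.trans hadj.reachable).exists_path_of_dist
  have hx : x ∉ q.support := fun hx => by
    have := (G.dist_le (q.takeUntil x hx)).trans (q.length_takeUntil_le_length hx)
    omega
  exact hG.eq_penultimate_of_adj_end hp hadj
    (hG.mem_support_of_ne_mem_support_of_adj_of_isPath hp hq hadj hx)

theorem IsAcyclic.eq_of_adj_of_dist_lt (hG : G.IsAcyclic) {r x y₁ y₂ : V} (hr : G.Reachable r x)
    (h₁ : G.Adj x y₁) (h₂ : G.Adj x y₂) (hd₁ : G.dist r y₁ < G.dist r x)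
    (hd₂ : G.dist r y₂ < G.dist r x) : y₁ = y₂ := by
  obtain ⟨p, hp⟩ := hr.exists_isPath
  rw [hG.eq_penultimate_of_dist_lt hp h₁ hd₁, hG.eq_penultimate_of_dist_lt hp h₂ hd₂]

theorem IsAcyclic.exists_injOn_edgeSet (hG : G.IsAcyclic) :
    ∃ f : Sym2 V → V, Set.InjOn f G.edgeSet ∧ ∀ e, f e ∈ e := by
  let root : V → V := fun v => (G.connectedComponentMk v).out
  have hroot : ∀ v, G.Reachable (root v) v := fun v =>
    ConnectedComponent.exact (Quot.out_eq _)
  have hroot_adj : ∀ {a b}, G.Adj a b → root a = root b := fun hab => by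
    simp only [root, ConnectedComponent.sound hab.reachable]
  have horient : ∀ e : Sym2 V, ∃ x y, e = s(x, y) ∧
      (e ∈ G.edgeSet → G.dist (root x) y < G.dist (root x) x) := by
    rintro ⟨a, b⟩
    by_cases hab : G.Adj a b
    · rcases (hG.dist_ne_of_adj hab (hroot a)).lt_or_gt with hlt | hlt
      · exact ⟨b, a, Sym2.eq_swap, fun _ => by rwa [← hroot_adj hab]⟩
      · exact ⟨a, b, rfl, fun _ => hlt⟩
    · exact ⟨a, b, rfl, fun h => absurd h hab⟩
  choose x y hxy hd using horient
  have hadj : ∀ e ∈ G.edgeSet, G.Adj (x e) (y e) := fun e he => by rwa [hxy e] at he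
  have hmem : ∀ e, x e ∈ e := fun e => by
    have h := Sym2.mem_mk_left (x e) (y e)
    rwa [← hxy e] at h
  refine ⟨x, fun e₁ he₁ e₂ he₂ hx => ?_, hmem⟩
  have hy : y e₁ = y e₂ := hG.eq_of_adj_of_dist_lt (hroot (x e₁)) (hadj e₁ he₁)
    (hx ▸ hadj e₂ he₂) (hd e₁ he₁) (hx ▸ hd e₂ he₂)
  rw [hxy e₁, hxy e₂, hx, hy]

end SimpleGraph

theorem exists_injective_mem_of_pairwise_disjoint {ι C : Type*} {part : ι → Finset C}
    (hdisj : Pairwise (Disjoint on part)) (hne : ∀ i, (part i).Nonempty) :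
    ∃ g : ι → C, Injective g ∧ ∀ i, g i ∈ part i := by
  choose g hg using hne
  refine ⟨g, fun i j hij => ?_, hg⟩
  by_contra hne
  exact Finset.disjoint_left.mp (hdisj hne) (hg i) (hij ▸ hg j)

theorem card_le_mul_ncard_of_forall_exists_mem {ι C : Type*} {s : Set ι} (hs : s.Finite)
    {t : Finset C} {part : ι → Finset C} {n : ℕ} (ht : ∀ c ∈ t, ∃ i ∈ s, c ∈ part i)
    (hpart : ∀ i ∈ s, #(part i) ≤ n) : #t ≤ n * s.ncard := by
  classical
  have hsub : t ⊆ hs.toFinset.biUnion part := fun c hc => by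
    obtain ⟨i, hi, hci⟩ := ht c hc
    exact mem_biUnion.2 ⟨i, hs.mem_toFinset.2 hi, hci⟩
  calc #t ≤ #(hs.toFinset.biUnion part) := card_le_card hsub
    _ ≤ #hs.toFinset * n := card_biUnion_le_card_mul _ _ _ fun i hi => hpart i (by simpa using hi)
    _ = n * s.ncard := by rw [Set.ncard_eq_toFinset_card s hs, mul_comm]

theorem ncard_incident_le_two_mul {V : Type*} {s : Set (Sym2 V)} (hs : s.Finite) :
    {v | ∃ e ∈ s, v ∈ e}.ncard ≤ 2 * s.ncard := by
  classical
  rcases Set.finite_or_infinite {v | ∃ e ∈ s, v ∈ e} with hV | hV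
  · rw [Set.ncard_eq_toFinset_card _ hV]
    refine card_le_mul_ncard_of_forall_exists_mem (part := Sym2.toFinset) hs
      (fun v hv => ?_) fun e _ => ?_
    · obtain ⟨e, he, hve⟩ := hV.mem_toFinset.1 hv
      exact ⟨e, he, Sym2.mem_toFinset.2 hve⟩
    · rw [Sym2.card_toFinset]
      split_ifs <;> omega
  · simp [hV.ncard]

theorem stmt_6_general {V C : Type*}
    (G : SimpleGraph V) (hG : G.IsAcyclic)
    (Es : Set (Sym2 V)) (hEs : Es ⊆ G.edgeSet)
    (α ρ : ℕ) (hcardlo : α ≤ Es.ncard) (hcardhi : Es.ncard ≤ 2 * α)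
    (part : V → Finset C)
    (hdisj : ∀ u v, u ≠ v → Disjoint (part u) (part v))
    (hne : ∀ v, (part v).Nonempty)
    (hsize : ∀ v, (part v).card ≤ 2 * ρ)
    (Gs : Finset C)
    (hGs : ∀ c, c ∈ Gs ↔ ∃ v, (∃ ed ∈ Es, v ∈ ed) ∧ c ∈ part v) :
    α - 1 ≤ Gs.card ∧ Gs.card ≤ 8 * ρ * α := by
  set T : Set V := {v | ∃ e ∈ Es, v ∈ e}
  obtain ⟨g, hg_inj, hg_mem⟩ :=
    exists_injective_mem_of_pairwise_disjoint (fun u v => hdisj u v) hne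
  obtain ⟨f, hf_inj, hf_mem⟩ := hG.exists_injOn_edgeSet
  have hgT : Set.MapsTo g T Gs := fun v hv => (hGs _).2 ⟨v, hv, hg_mem v⟩
  have hfEs : Set.MapsTo f Es T := fun e he => ⟨e, he, hf_mem e⟩
  have hT : T.Finite := .of_injOn hgT hg_inj.injOn Gs.finite_toSet
  have hEs_fin : Es.Finite := .of_injOn hfEs (hf_inj.mono hEs) hT
  have hEs_le_T : Es.ncard ≤ T.ncard := Set.ncard_le_ncard_of_injOn f hfEs (hf_inj.mono hEs) hT
  have hT_le_Gs : T.ncard ≤ Gs.card := by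
    simpa using Set.ncard_le_ncard_of_injOn g hgT hg_inj.injOn Gs.finite_toSet
  have hT_le_Es : T.ncard ≤ 2 * Es.ncard := ncard_incident_le_two_mul hEs_fin
  have hGs_le_T : Gs.card ≤ 2 * ρ * T.ncard :=
    card_le_mul_ncard_of_forall_exists_mem hT (fun c hc => (hGs c).1 hc) fun v _ => hsize v
  refine ⟨by omega, ?_⟩
  calc Gs.card ≤ 2 * ρ * (2 * (2 * α)) := hGs_le_T.trans (by gcongr; omega)
    _ = 8 * ρ * α := by ring

/-- Let `G` be a forest whose vertices are parts: pairwise disjoint nonempty sets of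
at most `2ρ` centres.  If `E_s` is a set of between `α` and `2α` edges of `G` and
`G_s` is the union of the parts of all vertices incident to an edge of `E_s`, then
`α − 1 ≤ |G_s| ≤ 8ρα`. -/
theorem stmt_6 {V C : Type*} [DecidableEq C]
    (G : SimpleGraph V) (hG : G.IsAcyclic)
    (Es : Set (Sym2 V)) (hEs : Es ⊆ G.edgeSet)
    (α ρ : ℕ) (hcardlo : α ≤ Es.ncard) (hcardhi : Es.ncard ≤ 2 * α)
    (part : V → Finset C)
    (hdisj : ∀ u v, u ≠ v → Disjoint (part u) (part v))
    (hne : ∀ v, (part v).Nonempty)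
    (hsize : ∀ v, (part v).card ≤ 2 * ρ)
    (Gs : Finset C)
    (hGs : ∀ c, c ∈ Gs ↔ ∃ v, (∃ ed ∈ Es, v ∈ ed) ∧ c ∈ part v) :
    α - 1 ≤ Gs.card ∧ Gs.card ≤ 8 * ρ * α :=
  stmt_6_general G hG Es hEs α ρ hcardlo hcardhi part hdisj hne hsize Gs hGs
end

section
/- Let S and O be disjoint finite sets of centres, and let G be a finite collection of groups where each group G_s is partitioned into a part P_s and an overlap part \bar{P}_s with |\bar{P}_s| ≤ ε|P_s|, the sets {P_s} are pairwise disjoint subsets of S ∪ O, and for each group we set O_s ⊆ (P_s ∩ O) ∪ \bar{P}_s and S_s ⊇ (G_s ∩ S) \ \bar{P}_s where G_s ∩ S are exactly the S-centres of G_s, with every centre of S appearing in some G_s ∩ S counted exactly once across groups. Then Σ_s (|O_s| − |S_s|) ≤ (1 + 2ε)|O| − (1 − 2ε)|S|. -/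
/-- Abstract form of Lemma 6: with pairwise disjoint parts `P_s ⊆ S ∪ O`,
overlaps `P̄_s` of size at most `ε|P_s|`, `|O_s| ≤ |P_s ∩ O| + |P̄_s|`,
`|S_s| ≥ (G_s∩S-count) − |P̄_s|`, where the `S`-counts of the groups sum to at
least `|S|` and the `|P_s ∩ O|` sum to at most `|O|`, we get
`Σ_s (|O_s| − |S_s|) ≤ (1+2ε)|O| − (1−2ε)|S|`. -/
theorem stmt_7 {ι Cc : Type*} [DecidableEq Cc] (I : Finset ι)
    (S O : Finset Cc) (hSO : Disjoint S O) (ε : ℝ) (hε : 0 ≤ ε)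
    (Ps Pbar Os Ss : ι → Finset Cc) (GsS : ι → ℕ)
    (hdisj : ∀ s ∈ I, ∀ t ∈ I, s ≠ t → Disjoint (Ps s) (Ps t))
    (hsub : ∀ s ∈ I, Ps s ⊆ S ∪ O)
    (hbar : ∀ s ∈ I, ((Pbar s).card : ℝ) ≤ ε * (Ps s).card)
    (hOs : ∀ s ∈ I, ((Os s).card : ℝ) ≤ ((Ps s ∩ O).card : ℝ) + (Pbar s).card)
    (hSs : ∀ s ∈ I, (GsS s : ℝ) - (Pbar s).card ≤ ((Ss s).card : ℝ))
    (hGsS : (S.card : ℝ) ≤ ∑ s ∈ I, (GsS s : ℝ))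
    (hPO : ∑ s ∈ I, ((Ps s ∩ O).card : ℝ) ≤ (O.card : ℝ)) :
    ∑ s ∈ I, (((Os s).card : ℝ) - ((Ss s).card : ℝ))
      ≤ (1 + 2*ε) * O.card - (1 - 2*ε) * S.card := by
  have hPsum : ∑ s ∈ I, ((Ps s).card : ℝ) ≤ (S.card : ℝ) + O.card := by
    have h1 : ∑ s ∈ I, (Ps s).card = (I.biUnion Ps).card :=
      (Finset.card_biUnion hdisj).symm
    have h2 : I.biUnion Ps ⊆ S ∪ O := by
      intro x hx
      obtain ⟨s, hs, hxs⟩ := Finset.mem_biUnion.mp hx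
      exact hsub s hs hxs
    have h3 : (I.biUnion Ps).card ≤ S.card + O.card :=
      le_trans (Finset.card_le_card h2) (Finset.card_union_le _ _)
    rw [← Nat.cast_sum, h1]
    exact_mod_cast h3
  have hbarsum : ∑ s ∈ I, ((Pbar s).card : ℝ) ≤ ε * ((S.card : ℝ) + O.card) := by
    calc ∑ s ∈ I, ((Pbar s).card : ℝ) ≤ ∑ s ∈ I, ε * ((Ps s).card : ℝ) :=
          Finset.sum_le_sum hbar
      _ = ε * ∑ s ∈ I, ((Ps s).card : ℝ) := by rw [Finset.mul_sum]
      _ ≤ ε * ((S.card : ℝ) + O.card) := by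
          exact mul_le_mul_of_nonneg_left hPsum hε
  have key : ∑ s ∈ I, (((Os s).card : ℝ) - ((Ss s).card : ℝ))
      ≤ ∑ s ∈ I, (((Ps s ∩ O).card : ℝ) + 2 * (Pbar s).card - GsS s) := by
    apply Finset.sum_le_sum
    intro s hs
    have := hOs s hs
    have := hSs s hs
    linarith
  have : ∑ s ∈ I, (((Ps s ∩ O).card : ℝ) + 2 * (Pbar s).card - GsS s)
      = (∑ s ∈ I, ((Ps s ∩ O).card : ℝ)) + 2 * (∑ s ∈ I, ((Pbar s).card : ℝ))
        - ∑ s ∈ I, (GsS s : ℝ) := by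
    rw [Finset.sum_sub_distrib, Finset.sum_add_distrib, Finset.mul_sum]
  rw [this] at key
  linarith
end

section
/- In the bad instance for ρ-swap local search for uniform-opening-cost-perturbed facility location with outliers: let z > ρ ≥ 1 be integers; the instance has z+1 candidate centres i, i_1, …, i_z with opening costs f_i = ρ and f_{i_ℓ} = 1, and z + z points: z points colocated at i and one point at each i_ℓ; all inter-set distances are some large M > z + ρ; the number of outliers allowed is z. Then the solution S = {i_1,…,i_z} (discarding the z points at i as outliers, cost z) is a local optimum under ρ-swaps (no swap of at most ρ centres in and ρ centres out strictly decreases cost while discarding at most z outliers), while the optimum O = {i} has cost ρ; hence the locality gap is z/ρ. -/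
/-! In `S = {i_1, …, i_z}` every served point sits on an open centre, so only the `z` unit
opening costs are paid. A ρ-swap that leaves a served point without a colocated open centre pays
`M > z`. Otherwise, if `i` stays closed, all `z` points at `i` must be discarded, which exhausts
the outlier budget, so every `i_ℓ` must stay open; and if `i` is opened, its cost `ρ` plus the at
least `z - ρ` surviving `i_ℓ` again add up to `z`. -/

open Finset

theorem sum_inf'_eq_zero_of_forall_exists {α β : Type*} {P : Finset α} {C : Finset β}
    (hC : C.Nonempty) {d : α → β → ℝ} (hd : ∀ p c, 0 ≤ d p c)
    (hcov : ∀ p ∈ P, ∃ c ∈ C, d p c = 0) : ∑ p ∈ P, C.inf' hC (d p) = 0 :=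
  sum_eq_zero fun p hp => by
    obtain ⟨c, hc, hpc⟩ := hcov p hp
    exact le_antisymm (hpc ▸ inf'_le _ hc) (le_inf' _ _ fun c _ => hd p c)

theorem le_sum_inf'_of_forall_le {α β : Type*} {P : Finset α} {C : Finset β}
    (hC : C.Nonempty) {d : α → β → ℝ} (hd : ∀ p c, 0 ≤ d p c) {M : ℝ} {p : α} (hp : p ∈ P)
    (hpM : ∀ c ∈ C, M ≤ d p c) : M ≤ ∑ q ∈ P, C.inf' hC (d q) :=
  (le_inf' _ _ hpM).trans <|
    single_le_sum (f := fun q => C.inf' hC (d q)) (fun q _ => le_inf' _ _ fun c _ => hd q c) hp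

namespace BadInstance

variable {z : ℕ}

/-- Centre `0` is `i`, centre `ℓ + 1` is `i_ℓ`. -/
def opening (ρ : ℕ) (c : Fin (z+1)) : ℝ := if c = 0 then ρ else 1

/-- Point `inl ℓ` is the `ℓ`-th point at `i`, point `inr ℓ` is the point at `i_ℓ`. -/
def distance (M : ℝ) : Fin z ⊕ Fin z → Fin (z+1) → ℝ
  | .inl _, c => if c = 0 then 0 else M
  | .inr p, c => if c = p.succ then 0 else M

variable {ρ : ℕ} {M : ℝ}

theorem card_univ_sdiff_zero : (univ \ {0} : Finset (Fin (z+1))).card = z := by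
  simp [← compl_eq_univ_sdiff, card_compl]

theorem sum_opening_of_zero_notMem {C : Finset (Fin (z+1))} (h0 : 0 ∉ C) :
    ∑ c ∈ C, opening ρ c = C.card := by
  rw [sum_congr rfl fun c hc => by rw [opening, if_neg (ne_of_mem_of_not_mem hc h0)]]
  simp

theorem sum_opening_of_zero_mem {C : Finset (Fin (z+1))} (h0 : 0 ∈ C) :
    ∑ c ∈ C, opening ρ c = ρ + (C.erase 0).card := by
  rw [← add_sum_erase _ _ h0, sum_opening_of_zero_notMem (notMem_erase 0 C), opening, if_pos rfl]

theorem opening_nonneg (c : Fin (z+1)) : 0 ≤ opening ρ c := by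
  unfold opening
  split_ifs <;> positivity

theorem distance_eq_zero_or_eq (p : Fin z ⊕ Fin z) (c : Fin (z+1)) :
    distance M p c = 0 ∨ distance M p c = M := by
  rcases p with _ | _ <;> simp only [distance] <;> split_ifs <;> simp

theorem distance_nonneg (hM : 0 ≤ M) (p : Fin z ⊕ Fin z) (c : Fin (z+1)) :
    0 ≤ distance M p c := by
  rcases distance_eq_zero_or_eq p c with h | h <;> rw [h]
  exact hM

theorem univ_sdiff_zero_subset_of_forall_exists (hM : M ≠ 0) {C : Finset (Fin (z+1))}
    {Z : Finset (Fin z ⊕ Fin z)} (h0 : 0 ∉ C) (hZ : Z.card ≤ z)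
    (hcov : ∀ p ∈ univ \ Z, ∃ c ∈ C, distance M p c = 0) : univ \ {0} ⊆ C := by
  have hA : univ.image Sum.inl ⊆ Z := by
    rintro _ hp
    obtain ⟨q, -, rfl⟩ := mem_image.1 hp
    by_contra hq
    obtain ⟨c, hc, hqc⟩ := hcov (Sum.inl q) (by simpa using hq)
    exact hM (by simpa [distance, ne_of_mem_of_not_mem hc h0] using hqc)
  have hZA : univ.image Sum.inl = Z :=
    eq_of_subset_of_card_le hA (by rwa [card_image_of_injective _ Sum.inl_injective, card_fin])
  intro c hc
  obtain ⟨q, rfl⟩ := Fin.exists_succ_eq.2 (by simpa using hc)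
  obtain ⟨c, hc, hqc⟩ := hcov (Sum.inr q) (by simp [← hZA])
  by_cases h : c = q.succ
  · rwa [← h]
  · exact absurd (by simpa [distance, h] using hqc) hM

theorem natCast_le_sum_opening_of_forall_exists (hM : M ≠ 0) {C : Finset (Fin (z+1))}
    {Z : Finset (Fin z ⊕ Fin z)} (hout : ((univ \ {0}) \ C).card ≤ ρ) (hZ : Z.card ≤ z)
    (hcov : ∀ p ∈ univ \ Z, ∃ c ∈ C, distance M p c = 0) : (z : ℝ) ≤ ∑ c ∈ C, opening ρ c := by
  by_cases h0 : 0 ∈ C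
  · have hsub : univ \ {0} ⊆ ((univ \ {0}) \ C) ∪ C.erase 0 := by
      intro c hc
      by_cases hcC : c ∈ C
      · exact mem_union_right _ (mem_erase.2 ⟨by simpa using hc, hcC⟩)
      · exact mem_union_left _ (mem_sdiff.2 ⟨hc, hcC⟩)
    have hcard := (card_le_card hsub).trans (card_union_le _ _)
    rw [card_univ_sdiff_zero] at hcard
    rw [sum_opening_of_zero_mem h0]
    exact_mod_cast hcard.trans (Nat.add_le_add_right hout _)
  · have hcard := card_le_card (univ_sdiff_zero_subset_of_forall_exists hM h0 hZ hcov)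
    rw [card_univ_sdiff_zero] at hcard
    rw [sum_opening_of_zero_notMem h0]
    exact_mod_cast hcard

theorem natCast_le_connection_add_opening (hM : (z : ℝ) < M) {C : Finset (Fin (z+1))}
    (hC : C.Nonempty) {Z : Finset (Fin z ⊕ Fin z)} (hout : ((univ \ {0}) \ C).card ≤ ρ)
    (hZ : Z.card ≤ z) :
    (z : ℝ) ≤ ∑ p ∈ univ \ Z, C.inf' hC (distance M p) + ∑ c ∈ C, opening ρ c := by
  have hM0 : 0 < M := (Nat.cast_nonneg z).trans_lt hM
  have hopen : 0 ≤ ∑ c ∈ C, opening ρ c := sum_nonneg fun c _ => opening_nonneg c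
  by_cases hcov : ∀ p ∈ univ \ Z, ∃ c ∈ C, distance M p c = 0
  · have hconn : 0 ≤ ∑ p ∈ univ \ Z, C.inf' hC (distance M p) :=
      sum_nonneg fun p _ => le_inf' _ _ fun c _ => distance_nonneg hM0.le p c
    linarith [natCast_le_sum_opening_of_forall_exists hM0.ne' hout hZ hcov]
  · push Not at hcov
    obtain ⟨p, hp, hpC⟩ := hcov
    have hpM : ∀ c ∈ C, M ≤ distance M p c := fun c hc =>
      ((distance_eq_zero_or_eq p c).resolve_left (hpC c hc)).ge
    linarith [le_sum_inf'_of_forall_le hC (distance_nonneg hM0.le) hp hpM]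

end BadInstance

open BadInstance

theorem stmt_11_general (z ρ : ℕ) (hzρ : ρ < z) (M : ℝ)
    (hM : (z : ℝ) + (ρ : ℝ) < M)
    (f : Fin (z+1) → ℝ)
    (hf : ∀ c, f c = if c = 0 then (ρ : ℝ) else 1)
    (d : (Fin z ⊕ Fin z) → Fin (z+1) → ℝ)
    (hdA : ∀ (p : Fin z) (c : Fin (z+1)), d (Sum.inl p) c = if c = 0 then 0 else M)
    (hdB : ∀ (p : Fin z) (c : Fin (z+1)),
      d (Sum.inr p) c = if (c : ℕ) = (p : ℕ) + 1 then 0 else M)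
    (cost : Finset (Fin (z+1)) → Finset (Fin z ⊕ Fin z) → ℝ)
    (hcost : ∀ (Cset : Finset (Fin (z+1))) (Z : Finset (Fin z ⊕ Fin z))
      (hC : Cset.Nonempty),
      cost Cset Z = (∑ p ∈ Finset.univ \ Z, Cset.inf' hC (fun c => d p c))
        + ∑ c ∈ Cset, f c)
    (S : Finset (Fin (z+1))) (hS : S = Finset.univ \ {0})
    (ZS : Finset (Fin z ⊕ Fin z)) (hZS : ZS = Finset.univ.image Sum.inl)
    (ZO : Finset (Fin z ⊕ Fin z)) (hZO : ZO = Finset.univ.image Sum.inr) :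
    cost S ZS = z ∧
    (∀ (C' : Finset (Fin (z+1))) (Z' : Finset (Fin z ⊕ Fin z)), C'.Nonempty →
      (S \ C').card ≤ ρ → (C' \ S).card ≤ ρ → Z'.card ≤ z →
      cost S ZS ≤ cost C' Z') ∧
    cost {0} ZO = ρ ∧
    cost S ZS / cost {0} ZO = (z : ℝ) / (ρ : ℝ) := by
  obtain rfl : f = opening ρ := funext hf
  obtain rfl : d = distance M := by
    ext (p | p) c
    · exact hdA p c
    · simp only [hdB, distance, Fin.ext_iff, Fin.val_succ]
  subst hS hZS hZO
  have hzM : (z : ℝ) < M := by linarith [Nat.cast_nonneg (α := ℝ) ρ]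
  have hd := distance_nonneg (z := z) ((Nat.cast_nonneg z).trans hzM.le)
  have hSne : (univ \ {0} : Finset (Fin (z+1))).Nonempty := by
    rw [← card_pos, card_univ_sdiff_zero]
    omega
  have hcostS : cost (univ \ {0}) (univ.image Sum.inl) = z := by
    rw [hcost _ _ hSne, sum_inf'_eq_zero_of_forall_exists hSne hd ?_,
      sum_opening_of_zero_notMem (by simp), card_univ_sdiff_zero, zero_add]
    rintro (q | q) hq
    · simp at hq
    · exact ⟨q.succ, by simp, by simp [distance]⟩
  have hcostO : cost {0} (univ.image Sum.inr) = ρ := by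
    rw [hcost _ _ (singleton_nonempty 0), sum_inf'_eq_zero_of_forall_exists _ hd ?_,
      sum_singleton, opening, if_pos rfl, zero_add]
    rintro (q | q) hq
    · exact ⟨0, mem_singleton_self 0, by simp [distance]⟩
    · simp at hq
  refine ⟨hcostS, fun C Z hC hout _ hZ => ?_, hcostO, by rw [hcostS, hcostO]⟩
  rw [hcostS, hcost C Z hC]
  exact natCast_le_connection_add_opening hzM hC hout hZ

/-- The bad instance for ρ-swap local search for UFL with outliers and non-uniform
opening costs.  Centres are `Fin (z+1)`: centre `0 = i` has opening cost `ρ` and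
centres `1,…,z` have cost `1`.  Points are `Fin z ⊕ Fin z`: `z` points colocated
at `i` (the `inl`s) and one point at each `i_ℓ` (the `inr`s); all cross distances
are `M > z + ρ`.  With outlier budget `z`: the solution `S = {i_1,…,i_z}`
discarding the points at `i` has cost `z`, it is a local optimum for ρ-swaps,
the solution `{i}` discarding the `B`-points has cost `ρ`, and the locality gap
is `z/ρ`. -/
theorem stmt_11 (z ρ : ℕ) (hρ : 1 ≤ ρ) (hzρ : ρ < z) (M : ℝ)
    (hM : (z : ℝ) + (ρ : ℝ) < M)
    (f : Fin (z+1) → ℝ)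
    (hf : ∀ c, f c = if c = 0 then (ρ : ℝ) else 1)
    (d : (Fin z ⊕ Fin z) → Fin (z+1) → ℝ)
    (hdA : ∀ (p : Fin z) (c : Fin (z+1)), d (Sum.inl p) c = if c = 0 then 0 else M)
    (hdB : ∀ (p : Fin z) (c : Fin (z+1)),
      d (Sum.inr p) c = if (c : ℕ) = (p : ℕ) + 1 then 0 else M)
    (cost : Finset (Fin (z+1)) → Finset (Fin z ⊕ Fin z) → ℝ)
    (hcost : ∀ (Cset : Finset (Fin (z+1))) (Z : Finset (Fin z ⊕ Fin z))
      (hC : Cset.Nonempty),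
      cost Cset Z = (∑ p ∈ Finset.univ \ Z, Cset.inf' hC (fun c => d p c))
        + ∑ c ∈ Cset, f c)
    (S : Finset (Fin (z+1))) (hS : S = Finset.univ \ {0})
    (ZS : Finset (Fin z ⊕ Fin z)) (hZS : ZS = Finset.univ.image Sum.inl)
    (ZO : Finset (Fin z ⊕ Fin z)) (hZO : ZO = Finset.univ.image Sum.inr) :
    cost S ZS = z ∧
    (∀ (C' : Finset (Fin (z+1))) (Z' : Finset (Fin z ⊕ Fin z)), C'.Nonempty →
      (S \ C').card ≤ ρ → (C' \ S).card ≤ ρ → Z'.card ≤ z →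
      cost S ZS ≤ cost C' Z') ∧
    cost {0} ZO = ρ ∧
    cost S ZS / cost {0} ZO = (z : ℝ) / (ρ : ℝ) :=
  stmt_11_general z ρ hzρ M hM f hf d hdA hdB cost hcost S hS ZS hZS ZO hZO
end

section
/- Let δ be a metric, j a point with δ(j, σ(j)) = c_j and δ(j, σ*(j)) = c*_j, and suppose D_{σ*(j)} := δ(σ*(j), S) ≤ ε·D_{σ(j)} where D_{σ(j)} := δ(σ(j), O) and ε ∈ (0, 1/5). If A is a set with δ(σ*(j), A) ≤ 5·D_{σ*(j)}, then δ(j, A) − c_j ≤ (1+5ε)·c*_j − (1−5ε)·c_j. -/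
/-- Reassigning a 'good' client with `D_{σ*(j)} ≤ ε D_{σ(j)}`: if
`δ(σ*(j), A) ≤ 5 D_{σ*(j)}`, `σ*(j) ∈ O`, `σ(j) ∈ S` and `ε ∈ (0,1/5)`, then
`δ(j, A) − c_j ≤ (1+5ε) c*_j − (1−5ε) c_j`. -/
theorem stmt_17 {α : Type*} [MetricSpace α] (S O A : Set α)
    (j sj sjstar : α) (hsj : sj ∈ S) (hsjstar : sjstar ∈ O) (hA : A.Nonempty)
    (ε : ℝ) (hε0 : 0 < ε) (hε1 : ε < 1/5)
    (hD : Metric.infDist sjstar S ≤ ε * Metric.infDist sj O)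
    (hlem : Metric.infDist sjstar A ≤ 5 * Metric.infDist sjstar S) :
    Metric.infDist j A - dist j sj
      ≤ (1 + 5*ε) * dist j sjstar - (1 - 5*ε) * dist j sj := by
  have h1 : Metric.infDist j A ≤ Metric.infDist sjstar A + dist j sjstar :=
    Metric.infDist_le_infDist_add_dist
  have h2 : Metric.infDist sj O ≤ dist sj sjstar := Metric.infDist_le_dist_of_mem hsjstar
  have h3 : dist sj sjstar ≤ dist sj j + dist j sjstar := dist_triangle _ _ _
  have h4 : dist sj j = dist j sj := dist_comm _ _
  nlinarith [hε0.le]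
end
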